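/- Let B = [W, T] ∈ ℝ^{m×s} have rank s, and suppose G ∈ ℝ^{s×n} has columns in Δ^s and satisfies ‖m'_j − (B + N_B)G(:,j)‖₂ ≤ ε + ε̄ for all j, where m'_j = B f_j + n_j with f_j ∈ Δ^s, ‖n_j‖₂ ≤ ε and every column of N_B has norm at most ε̄. Then for any index i and column j such that f_j(i) = 0, it holds that G(i,j) ≤ 2(ε̄ + ε)/σ_s(B). -/

import Mathlib

/-!
Put `x := f_j - G(:,j)`. Then `B x` is the approximation residual `m'_j - (B + N_B) G(:,j)`
minus the noise `n_j` plus `N_B G(:,j)`, so `‖B x‖ ≤ (ε + ε̄) + ε + ε̄`, the last term because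
`G(:,j)` lies in the simplex. Since `f_j(i) = 0`, `G(i,j) = |x i| ≤ ‖x‖₂ ≤ ‖B x‖ / σ_s(B)`.
-/

/-- The smallest singular value of the matrix with columns `b i`. -/
noncomputable def sigmaMinE {m s : ℕ} (b : Fin s → EuclideanSpace ℝ (Fin m)) : ℝ :=
  ⨅ x : {x : Fin s → ℝ // ∑ i, x i ^ 2 = 1}, ‖∑ i, x.1 i • b i‖

open Finset

section SigmaMin

variable {m s : ℕ} (b : Fin s → EuclideanSpace ℝ (Fin m))

lemma sigmaMinE_le_norm_sum {x : Fin s → ℝ} (hx : ∑ i, x i ^ 2 = 1) :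
    sigmaMinE b ≤ ‖∑ i, x i • b i‖ :=
  ciInf_le (f := fun y : {y : Fin s → ℝ // ∑ i, y i ^ 2 = 1} => ‖∑ i, y.1 i • b i‖)
    ⟨0, by rintro _ ⟨y, rfl⟩; exact norm_nonneg _⟩ ⟨x, hx⟩

lemma sigmaMinE_mul_sqrt_le (x : Fin s → ℝ) :
    sigmaMinE b * √(∑ i, x i ^ 2) ≤ ‖∑ i, x i • b i‖ := by
  obtain ht | ht := (Real.sqrt_nonneg (∑ i, x i ^ 2)).eq_or_lt
  · rw [← ht, mul_zero]
    exact norm_nonneg _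
  have hsum : 0 < ∑ i, x i ^ 2 := Real.sqrt_pos.mp ht
  have hunit : ∑ i, ((√(∑ i, x i ^ 2))⁻¹ * x i) ^ 2 = 1 := by
    simp_rw [mul_pow, ← mul_sum, inv_pow, Real.sq_sqrt hsum.le]
    exact inv_mul_cancel₀ hsum.ne'
  have h := sigmaMinE_le_norm_sum b hunit
  simp_rw [mul_smul, ← smul_sum, norm_smul, norm_inv, Real.norm_of_nonneg ht.le] at h
  rwa [le_inv_mul_iff₀ ht, mul_comm] at h

lemma sigmaMinE_mul_abs_le (x : Fin s → ℝ) (i : Fin s) :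
    sigmaMinE b * |x i| ≤ ‖∑ a, x a • b a‖ := by
  refine le_trans ?_ (sigmaMinE_mul_sqrt_le b x)
  have hσ : 0 ≤ sigmaMinE b := Real.iInf_nonneg fun _ => norm_nonneg _
  exact mul_le_mul_of_nonneg_left
    (Real.abs_le_sqrt (single_le_sum (fun a _ => sq_nonneg (x a)) (mem_univ i))) hσ

/-- Injective linear maps on a finite-dimensional space are antilipschitz, which bounds
`‖∑ i, x i • b i‖` below on the Euclidean unit sphere. -/
lemma sigmaMinE_pos (hb : LinearIndependent ℝ b) [Nonempty (Fin s)] : 0 < sigmaMinE b := by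
  let L : EuclideanSpace ℝ (Fin s) →ₗ[ℝ] EuclideanSpace ℝ (Fin m) :=
    Fintype.linearCombination ℝ b ∘ₗ (WithLp.linearEquiv 2 ℝ (Fin s → ℝ)).toLinearMap
  have hL : LinearMap.ker L = ⊥ := LinearMap.ker_eq_bot.mpr <|
    hb.fintypeLinearCombination_injective.comp (WithLp.linearEquiv 2 ℝ _).injective
  obtain ⟨K, hK, hanti⟩ := L.exists_antilipschitzWith hL
  have : Nonempty {x : Fin s → ℝ // ∑ i, x i ^ 2 = 1} := by
    obtain ⟨i⟩ := ‹Nonempty (Fin s)›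
    exact ⟨⟨Pi.single i 1, by simp [Pi.single_apply, apply_ite (· ^ 2)]⟩⟩
  have hbound : (K : ℝ)⁻¹ ≤ sigmaMinE b := by
    refine le_ciInf fun ⟨x, hx⟩ => ?_
    have h := hanti.le_mul_norm (map_zero L) (WithLp.toLp 2 x)
    have hnorm : ‖WithLp.toLp 2 x‖ = 1 := by
      simp [EuclideanSpace.norm_eq, hx]
    simp only [hnorm, L, LinearMap.comp_apply, LinearEquiv.coe_coe, WithLp.linearEquiv_apply,
      Fintype.linearCombination_apply] at h
    rw [inv_le_iff_one_le_mul₀ (by exact_mod_cast hK), mul_comm]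
    exact h
  exact (inv_pos.mpr (by exact_mod_cast hK)).trans_le hbound

end SigmaMin

lemma norm_sum_smul_le_of_sum_le_one {ι E : Type*} [NormedAddCommGroup E] [NormedSpace ℝ E]
    (t : Finset ι) {w : ι → ℝ} {v : ι → E} {C : ℝ} (hw0 : ∀ i ∈ t, 0 ≤ w i)
    (hw1 : ∑ i ∈ t, w i ≤ 1) (hv : ∀ i ∈ t, ‖v i‖ ≤ C) (hC : 0 ≤ C) :
    ‖∑ i ∈ t, w i • v i‖ ≤ C :=
  calc ‖∑ i ∈ t, w i • v i‖ ≤ ∑ i ∈ t, w i * C := by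
        refine (norm_sum_le _ _).trans (sum_le_sum fun i hi => ?_)
        rw [norm_smul, Real.norm_of_nonneg (hw0 i hi)]
        exact mul_le_mul_of_nonneg_left (hv i hi) (hw0 i hi)
    _ = (∑ i ∈ t, w i) * C := (sum_mul _ _ _).symm
    _ ≤ C := mul_le_of_le_one_left hC hw1

theorem stmt_18_general (m s n : ℕ)
    (b : Fin s → EuclideanSpace ℝ (Fin m)) (hb : LinearIndependent ℝ b)
    (ε εb : ℝ) (hεb : 0 ≤ εb)
    (G : Matrix (Fin s) (Fin n) ℝ)
    (hG0 : ∀ a j, 0 ≤ G a j) (hG1 : ∀ j, ∑ a, G a j ≤ 1)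
    (NB : Fin s → EuclideanSpace ℝ (Fin m)) (hNB : ∀ a, ‖NB a‖ ≤ εb)
    (fc : Fin n → Fin s → ℝ)
    (nv : Fin n → EuclideanSpace ℝ (Fin m)) (hnv : ∀ j, ‖nv j‖ ≤ ε)
    (M' : Fin n → EuclideanSpace ℝ (Fin m))
    (hM' : ∀ j, M' j = (∑ a, fc j a • b a) + nv j)
    (happrox : ∀ j, ‖M' j - ∑ a, G a j • (b a + NB a)‖ ≤ ε + εb) :
    ∀ i j, fc j i = 0 → G i j ≤ 2 * (εb + ε) / sigmaMinE b := by
  intro i j hfij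
  have : Nonempty (Fin s) := ⟨i⟩
  set x : Fin s → ℝ := fun a => fc j a - G a j
  have hres : ∑ a, x a • b a =
      (M' j - ∑ a, G a j • (b a + NB a)) - nv j + ∑ a, G a j • NB a := by
    simp only [x, hM' j, sub_smul, smul_add, sum_sub_distrib, sum_add_distrib]
    abel
  have hBx : ‖∑ a, x a • b a‖ ≤ 2 * (εb + ε) :=
    calc ‖∑ a, x a • b a‖
        ≤ ‖M' j - ∑ a, G a j • (b a + NB a)‖ + ‖nv j‖ + ‖∑ a, G a j • NB a‖ := by
          rw [hres, sub_eq_add_neg _ (nv j), ← norm_neg (nv j)]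
          exact norm_add₃_le
      _ ≤ (ε + εb) + ε + εb := by
          gcongr
          exacts [happrox j, hnv j, norm_sum_smul_le_of_sum_le_one _ (fun a _ => hG0 a j)
            (hG1 j) (fun a _ => hNB a) hεb]
      _ = 2 * (εb + ε) := by ring
  have hxi : |x i| = G i j := by simp [x, hfij, abs_of_nonneg (hG0 i j)]
  rw [le_div_iff₀ (sigmaMinE_pos b hb), ← hxi, mul_comm]
  exact (sigmaMinE_mul_abs_le b x i).trans hBx

/-- entrywise bound on the abundances `G` of the outlier-detection algorithm in
the noisy case: if `f_j(i) = 0` then `G(i,j) ≤ 2(ε̄+ε)/σ_s(B)`. -/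
theorem stmt_18 (m s n : ℕ)
    (b : Fin s → EuclideanSpace ℝ (Fin m)) (hb : LinearIndependent ℝ b)
    (ε εb : ℝ) (hε : 0 ≤ ε) (hεb : 0 ≤ εb)
    (G : Matrix (Fin s) (Fin n) ℝ)
    (hG0 : ∀ a j, 0 ≤ G a j) (hG1 : ∀ j, ∑ a, G a j ≤ 1)
    (NB : Fin s → EuclideanSpace ℝ (Fin m)) (hNB : ∀ a, ‖NB a‖ ≤ εb)
    (fc : Fin n → Fin s → ℝ)
    (hf0 : ∀ j a, 0 ≤ fc j a) (hf1 : ∀ j, ∑ a, fc j a ≤ 1)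
    (nv : Fin n → EuclideanSpace ℝ (Fin m)) (hnv : ∀ j, ‖nv j‖ ≤ ε)
    (M' : Fin n → EuclideanSpace ℝ (Fin m))
    (hM' : ∀ j, M' j = (∑ a, fc j a • b a) + nv j)
    (happrox : ∀ j, ‖M' j - ∑ a, G a j • (b a + NB a)‖ ≤ ε + εb) :
    ∀ i j, fc j i = 0 → G i j ≤ 2 * (εb + ε) / sigmaMinE b :=
  stmt_18_general m s n b hb ε εb hεb G hG0 hG1 NB hNB fc nv hnv M' hM' happrox
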